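/- Let F be a field, n ≥ 2, T and S sets, k ≤ n, G = GL(n,F), and fix t_{1,s_1},...,t_{k,s_k} ∈ T with s_1,...,s_k ∈ S. Let (u^0_{i,s})_{s∈S, i=1,...,k} be any system of functions u^0_{i,s} : T → F such that the k×k matrix [u^0_{s_1}(t_{1,s_1}),...,u^0_{s_k}(t_{k,s_k})] equals the identity matrix I_k. Then there exists a family (u_s)_{s∈S} ∈ V(t_{1,s_1},...,t_{k,s_k}) such that ([u_{s_1}(t_{1,s_1}),...,u_{s_k}(t_{k,s_k})]_{1,2,...,k})^{-1} u_s(t)_{1,2,...,k} = u^0_s(t) for all t ∈ T and s ∈ S, and this family is unique up to G-equivalence. -/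

import Mathlib

open Matrix

/-- The `n × k` matrix whose columns are `u_{s_j}(t_{j,s_j})`, `j = 1, ..., k`. -/
def famColMat {F : Type*} [Field F] {T S : Type*} {n k : ℕ}
    (u : S → T → Fin n → F) (ss : Fin k → S) (ts : Fin k → T) :
    Matrix (Fin n) (Fin k) F :=
  Matrix.of fun i j => u (ss j) (ts j) i

/-- The rank of a family of maps `(u_s : T → Fⁿ)_{s ∈ S}`:
the dimension of `Span {u_s(t) : t ∈ T, s ∈ S}`. -/
noncomputable def famRank (F : Type*) [Field F] {T S : Type*} {n : ℕ}
    (u : S → T → Fin n → F) : ℕ :=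
  Module.finrank F (Submodule.span F (Set.range fun p : S × T => u p.1 p.2))

/-!
Write `M = [u_{s_1}(t_{1,s_1}), …, u_{s_k}(t_{k,s_k})]` and `A = M_{1,…,k}`. The normalization
at the points `t_{j,s_j}` says `A⁻¹ A = I_k`, and the rank conditions put every `u_s(t)` in the
column space of `M`, say `u_s(t) = M c`; restricting to the first `k` rows gives
`A c = u_s(t)_{1,…,k}`, hence `c = u⁰_s(t)`. So every admissible family is `u_s(t) = M u⁰_s(t)`
with `M` of full column rank `k`, and any two such `M` are related by an element of `GL(n, F)`.
For existence take for `M` the first `k` columns of `I_n`.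
-/

open Submodule

theorem LinearIndependent.exists_linearEquiv_apply_eq {K ι V : Type*} [Field K] [Finite ι]
    [AddCommGroup V] [Module K V] {v w : ι → V}
    (hv : LinearIndependent K v) (hw : LinearIndependent K w) :
    ∃ g : V ≃ₗ[K] V, ∀ i, g (v i) = w i := by
  have : FiniteDimensional K (span K (Set.range v)) :=
    FiniteDimensional.span_of_finite K (Set.finite_range v)
  obtain ⟨g, hg⟩ := exists_linearEquiv_restrict_eq
    (hv.linearCombinationEquiv.symm ≪≫ₗ hw.linearCombinationEquiv)
  refine ⟨g, fun i => ?_⟩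
  rw [← hg ⟨v i, subset_span ⟨i, rfl⟩⟩, LinearEquiv.trans_apply]
  change (hw.linearCombinationEquiv (hv.repr _) : V) = w i
  rw [hv.repr_eq_single i ⟨v i, _⟩ rfl]
  simp

theorem Matrix.GeneralLinearGroup.exists_mulVec_eq {R m : Type*} [CommRing R] [Fintype m]
    [DecidableEq m] (e : (m → R) ≃ₗ[R] (m → R)) :
    ∃ g : GL m R, ∀ x, (g : Matrix m m R) *ᵥ x = e x := by
  refine ⟨toLin.symm (LinearMap.GeneralLinearGroup.ofLinearEquiv e), fun x => ?_⟩
  have h := toLin_apply (toLin.symm (LinearMap.GeneralLinearGroup.ofLinearEquiv e)) x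
  rw [MulEquiv.apply_symm_apply] at h
  exact h.symm

theorem Matrix.exists_GL_mul_eq_of_linearIndependent_col {K m k : Type*} [Field K] [Fintype m]
    [DecidableEq m] [Finite k] {M M' : Matrix m k K}
    (hM : LinearIndependent K M.col) (hM' : LinearIndependent K M'.col) :
    ∃ g : GL m K, (g : Matrix m m K) * M = M' := by
  obtain ⟨e, he⟩ := hM.exists_linearEquiv_apply_eq hM'
  obtain ⟨g, hg⟩ := GeneralLinearGroup.exists_mulVec_eq e
  refine ⟨g, ext fun i j => ?_⟩
  change (g *ᵥ M.col j) i = M'.col j i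
  rw [hg, he]

theorem Matrix.linearIndependent_col_of_rank_eq {K m k : Type*} [Field K] [Fintype k]
    {M : Matrix m k K} (h : M.rank = Fintype.card k) : LinearIndependent K M.col := by
  rw [linearIndependent_iff_card_eq_finrank_span, ← h, rank_eq_finrank_span_cols]
  rfl

theorem Matrix.one_submatrix_id_submatrix {R m k : Type*} [Zero R] [One R] [DecidableEq m]
    [DecidableEq k] {r : k → m} (hr : Function.Injective r) :
    ((1 : Matrix m m R).submatrix id r).submatrix r id = 1 := by
  rw [submatrix_submatrix, Function.id_comp, Function.comp_id, submatrix_one r hr]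

theorem Matrix.rank_one_submatrix_id {R m k : Type*} [CommRing R] [StrongRankCondition R]
    [Fintype m] [DecidableEq m] [Fintype k] [DecidableEq k] {r : k → m}
    (hr : Function.Injective r) :
    ((1 : Matrix m m R).submatrix id r).rank = Fintype.card k := by
  refine le_antisymm (rank_le_card_width _) ?_
  calc Fintype.card k = (1 : Matrix k k R).rank := rank_one.symm
    _ ≤ _ := by
      rw [← one_submatrix_id_submatrix hr]
      exact rank_submatrix_le _ r id

section Family

variable {F T S : Type*} [Field F] {n k : ℕ} (u : S → T → Fin n → F) (ss : Fin k → S)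
  (ts : Fin k → T)

theorem famColMat_mulVec (M : Matrix (Fin n) (Fin k) F) (u0 : Fin k → S → T → F) :
    famColMat (fun s t => M *ᵥ fun i => u0 i s t) ss ts = M * of fun i j => u0 i (ss j) (ts j) :=
  rfl

theorem range_mulVecLin_famColMat_le :
    LinearMap.range (famColMat u ss ts).mulVecLin ≤
      span F (Set.range fun p : S × T => u p.1 p.2) := by
  rw [range_mulVecLin, span_le]
  rintro _ ⟨j, rfl⟩
  exact subset_span ⟨(ss j, ts j), rfl⟩

theorem famRank_eq_rank_of_eq_mulVec {M : Matrix (Fin n) (Fin k) F} (c : S → T → Fin k → F)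
    (hu : ∀ s t, u s t = M *ᵥ c s t) (hM : famColMat u ss ts = M) :
    famRank F u = M.rank := by
  subst hM
  have hspan : span F (Set.range fun p : S × T => u p.1 p.2) =
      LinearMap.range (famColMat u ss ts).mulVecLin := by
    refine le_antisymm ?_ (range_mulVecLin_famColMat_le u ss ts)
    rw [span_le]
    rintro _ ⟨⟨s, t⟩, rfl⟩
    exact ⟨c s t, (hu s t).symm⟩
  rw [famRank, hspan, Matrix.rank]

theorem mem_range_mulVecLin_famColMat (h : famRank F u = (famColMat u ss ts).rank) (s : S)
    (t : T) : u s t ∈ LinearMap.range (famColMat u ss ts).mulVecLin := by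
  rw [eq_of_le_of_finrank_eq (range_mulVecLin_famColMat_le u ss ts) h.symm]
  exact subset_span ⟨(s, t), rfl⟩

theorem eq_famColMat_mulVec {r : Fin k → Fin n} {u0 : Fin k → S → T → F}
    (hI : (of fun i j => u0 i (ss j) (ts j)) = 1)
    (hrank : famRank F u = (famColMat u ss ts).rank)
    (hnorm : ∀ s t, ((famColMat u ss ts).submatrix r id)⁻¹ *ᵥ (fun m => u s t (r m)) =
      fun i => u0 i s t)
    (s : S) (t : T) : u s t = famColMat u ss ts *ᵥ fun i => u0 i s t := by
  set M := famColMat u ss ts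
  set A := M.submatrix r id
  have hA : A⁻¹ * A = 1 := by
    rw [← hI]
    ext i j
    exact congrFun (hnorm (ss j) (ts j)) i
  obtain ⟨c, hc⟩ := mem_range_mulVecLin_famColMat u ss ts hrank s t
  have hc' : c = fun i => u0 i s t := by
    rw [← hnorm s t, ← hc]
    change c = A⁻¹ *ᵥ (A *ᵥ c)
    rw [mulVec_mulVec, hA, one_mulVec]
  rw [← hc', ← hc, mulVecLin_apply]

end Family

theorem families_exists_unique_up_to_GL_equivalence_general {F : Type*} [Field F] {T S : Type*}
    {n k : ℕ} (hk : k ≤ n) (ss : Fin k → S) (ts : Fin k → T)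
    (u0 : Fin k → S → T → F)
    (hI : (Matrix.of fun i j => u0 i (ss j) (ts j)) = (1 : Matrix (Fin k) (Fin k) F)) :
    (∃ u : S → T → Fin n → F,
        famRank F u = k ∧ (famColMat u ss ts).rank = k ∧
        ∀ s : S, ∀ t : T,
          ((famColMat u ss ts).submatrix (Fin.castLE hk) id)⁻¹.mulVec
              (fun m => u s t (Fin.castLE hk m)) = fun i => u0 i s t) ∧
    (∀ u v : S → T → Fin n → F,
        (famRank F u = k ∧ (famColMat u ss ts).rank = k ∧
          ∀ s : S, ∀ t : T,
            ((famColMat u ss ts).submatrix (Fin.castLE hk) id)⁻¹.mulVec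
                (fun m => u s t (Fin.castLE hk m)) = fun i => u0 i s t) →
        (famRank F v = k ∧ (famColMat v ss ts).rank = k ∧
          ∀ s : S, ∀ t : T,
            ((famColMat v ss ts).submatrix (Fin.castLE hk) id)⁻¹.mulVec
                (fun m => v s t (Fin.castLE hk m)) = fun i => u0 i s t) →
        ∃ g : GL (Fin n) F, ∀ s : S, ∀ t : T,
          (g : Matrix (Fin n) (Fin n) F).mulVec (u s t) = v s t) := by
  constructor
  · set E := (1 : Matrix (Fin n) (Fin n) F).submatrix id (Fin.castLE hk)
    have hE : famColMat (fun s t => E *ᵥ fun i => u0 i s t) ss ts = E := by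
      rw [famColMat_mulVec, hI, Matrix.mul_one]
    have hEsub : E.submatrix (Fin.castLE hk) id = 1 :=
      one_submatrix_id_submatrix (Fin.castLE_injective hk)
    have hErank : E.rank = k := by
      rw [rank_one_submatrix_id (Fin.castLE_injective hk), Fintype.card_fin]
    refine ⟨fun s t => E *ᵥ fun i => u0 i s t, ?_, by rw [hE, hErank], fun s t => ?_⟩
    · rw [famRank_eq_rank_of_eq_mulVec _ ss ts _ (fun _ _ => rfl) hE, hErank]
    · rw [hE, hEsub, inv_one, one_mulVec]
      change E.submatrix (Fin.castLE hk) id *ᵥ _ = _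
      rw [hEsub, one_mulVec]
  · rintro u v ⟨hu, hMu, hnu⟩ ⟨hv, hMv, hnv⟩
    obtain ⟨g, hg⟩ := exists_GL_mul_eq_of_linearIndependent_col
      (linearIndependent_col_of_rank_eq (hMu.trans (Fintype.card_fin k).symm))
      (linearIndependent_col_of_rank_eq (hMv.trans (Fintype.card_fin k).symm))
    refine ⟨g, fun s t => ?_⟩
    rw [eq_famColMat_mulVec u ss ts hI (hu.trans hMu.symm) hnu,
      eq_famColMat_mulVec v ss ts hI (hv.trans hMv.symm) hnv, mulVec_mulVec, hg]

/-- Theorem 5: given functions `u⁰_{i,s} : T → F` with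
`[u⁰_{s_1}(t_{1,s_1}),...,u⁰_{s_k}(t_{k,s_k})] = I_k`, there exists a family
`(u_s) ∈ V(t_{1,s_1},...,t_{k,s_k})` such that
`([u_{s_1}(t_{1,s_1}),...]_{1,...,k})⁻¹ u_s(t)_{1,...,k} = u⁰_s(t)` for all `t, s`,
and any two such families are `GL(n,F)`-equivalent. -/
theorem families_exists_unique_up_to_GL_equivalence {F : Type*} [Field F] {T S : Type*}
    {n k : ℕ} (hn : 2 ≤ n) (hk : k ≤ n) (ss : Fin k → S) (ts : Fin k → T)
    (u0 : Fin k → S → T → F)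
    (hI : (Matrix.of fun i j => u0 i (ss j) (ts j)) = (1 : Matrix (Fin k) (Fin k) F)) :
    (∃ u : S → T → Fin n → F,
        famRank F u = k ∧ (famColMat u ss ts).rank = k ∧
        ∀ s : S, ∀ t : T,
          ((famColMat u ss ts).submatrix (Fin.castLE hk) id)⁻¹.mulVec
              (fun m => u s t (Fin.castLE hk m)) = fun i => u0 i s t) ∧
    (∀ u v : S → T → Fin n → F,
        (famRank F u = k ∧ (famColMat u ss ts).rank = k ∧
          ∀ s : S, ∀ t : T,
            ((famColMat u ss ts).submatrix (Fin.castLE hk) id)⁻¹.mulVec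
                (fun m => u s t (Fin.castLE hk m)) = fun i => u0 i s t) →
        (famRank F v = k ∧ (famColMat v ss ts).rank = k ∧
          ∀ s : S, ∀ t : T,
            ((famColMat v ss ts).submatrix (Fin.castLE hk) id)⁻¹.mulVec
                (fun m => v s t (Fin.castLE hk m)) = fun i => u0 i s t) →
        ∃ g : GL (Fin n) F, ∀ s : S, ∀ t : T,
          (g : Matrix (Fin n) (Fin n) F).mulVec (u s t) = v s t) :=
  families_exists_unique_up_to_GL_equivalence_general hk ss ts u0 hI
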